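/- Fix 1 ≤ ξ < ω₁ and let (x_k) be a block sequence in 𝔛_{0,1}^{ω^ξ}. Then α_{<ω^ξ}((x_k)) = 0 if and only if for every ε > 0 and every n ∈ ℕ there exist j_0, k_0 ∈ ℕ such that for every k ≥ k_0 and every 𝓢_{ξ_n}-admissible very fast growing sequence (α_q)_{q=1}^d of α-averages in W with s(α_q) > j_0 for all q = 1,…,d, one has Σ_{q=1}^d |α_q(x_k)| < ε. -/

import Mathlib

open Filter Topology

noncomputable section

/-- The first uncountable ordinal `ω₁`. -/
def omega1 : Ordinal := (Cardinal.aleph 1).ord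

/-- The combinatorial operation `𝓕[𝓖]` on families of finite subsets of `ℕ`:
all unions `E₁ ∪ ⋯ ∪ Eₙ` with `E₁ < ⋯ < Eₙ` nonempty members of `𝓖` and
`(min Eᵢ)ᵢ ∈ 𝓕`. -/
def famOp (F G : Set (Finset ℕ)) : Set (Finset ℕ) :=
  {E | ∃ (n : ℕ) (Es : ℕ → Finset ℕ),
    (∀ i < n, Es i ∈ G) ∧ (∀ i < n, (Es i).Nonempty) ∧
    (∀ i j : ℕ, i < j → j < n → ∀ a ∈ Es i, ∀ b ∈ Es j, a < b) ∧
    (Finset.image (fun i => sInf ((Es i : Set ℕ))) (Finset.range n) ∈ F) ∧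
    E = (Finset.range n).biUnion Es}

/-- The first Schreier family `𝓢₁ = {E : |E| ≤ min E}`. -/
def schreierOne : Set (Finset ℕ) := {E : Finset ℕ | ∀ n ∈ E, E.card ≤ n}

/-- A system of Schreier families `(𝓢_ξ)` together with the fixed cofinal sequences
`(ξ_n)` used at countable limit ordinals: `𝓢_0 = {∅} ∪ {{n} : n ∈ ℕ}`,
`𝓢_{ξ+1} = 𝓢₁[𝓢_ξ]`, and at a countable limit `ξ`,
`𝓢_ξ = {E : ∃ n, n ≤ min E ∧ E ∈ 𝓢_{ξ_n}}` where `ξ_n ↑ ξ` and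
`𝓢_{ξ_n} ⊆ 𝓢_{ξ_{n+1}}`. -/
structure SchreierSystem where
  S : Ordinal → Set (Finset ℕ)
  seq : Ordinal → ℕ → Ordinal
  S_zero : S 0 = {E : Finset ℕ | E = ∅ ∨ ∃ n : ℕ, E = {n}}
  S_succ : ∀ ξ : Ordinal, S (ξ + 1) = famOp schreierOne (S ξ)
  seq_strictMono : ∀ ξ : Ordinal, ξ < omega1 → Order.IsSuccLimit ξ → StrictMono (seq ξ)
  seq_lt : ∀ ξ : Ordinal, ξ < omega1 → Order.IsSuccLimit ξ → ∀ n : ℕ, seq ξ n < ξ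
  seq_iSup : ∀ ξ : Ordinal, ξ < omega1 → Order.IsSuccLimit ξ → (⨆ n : ℕ, seq ξ n) = ξ
  S_seq_mono : ∀ ξ : Ordinal, ξ < omega1 → Order.IsSuccLimit ξ → ∀ n : ℕ, S (seq ξ n) ⊆ S (seq ξ (n + 1))
  S_limit : ∀ ξ : Ordinal, ξ < omega1 → Order.IsSuccLimit ξ →
    S ξ = {E : Finset ℕ | ∃ n : ℕ, (∀ m ∈ E, n ≤ m) ∧ E ∈ S (seq ξ n)}

section XSpace

/-- Finitely supported real sequences `c₀₀`. -/
abbrev c00 : Type := ℕ →₀ ℝ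

/-- The action of a functional `f ∈ c₀₀` on a vector `x ∈ c₀₀`: `f(x) = Σ_i f i * x i`. -/
def dotc (f x : c00) : ℝ := f.sum fun i a => a * x i

/-- Successive supports: every element of `supp f` is smaller than every element of
`supp g`. -/
def suppLt (f g : c00) : Prop := ∀ i ∈ f.support, ∀ j ∈ g.support, i < j

/-- The minimum of the support of `f`. -/
def minSupp (f : c00) : ℕ := sInf {i : ℕ | f i ≠ 0}

/-- The maximum of the support of `f` (`0` for `f = 0`). -/
def maxSupp (f : c00) : ℕ := f.support.sup id

/-- `α` is an `α`-average of size `ℓ` in `G`: an element of `G` of the form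
`(1/ℓ) (f_1 + ⋯ + f_d)` with `f_1 < ⋯ < f_d ∈ G`, `d ≤ ℓ` and `ℓ ≥ 2`. -/
def IsAvg (G : Set c00) (α : c00) (ℓ : ℕ) : Prop :=
  α ∈ G ∧ 2 ≤ ℓ ∧ ∃ (d : ℕ) (f : ℕ → c00), 1 ≤ d ∧ d ≤ ℓ ∧ (∀ q < d, f q ∈ G) ∧
    (∀ q : ℕ, q + 1 < d → suppLt (f q) (f (q + 1))) ∧
    α = (ℓ : ℝ)⁻¹ • ∑ q ∈ Finset.range d, f q

/-- `(α_q)_{q<d}` (with sizes `sz q`) is a very fast growing and `Fam`-admissible sequence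
of `α`-averages in `G`. -/
def IsVFGAdm (G : Set c00) (Fam : Set (Finset ℕ)) (α : ℕ → c00) (sz : ℕ → ℕ) (d : ℕ) : Prop :=
  (∀ q < d, IsAvg G (α q) (sz q)) ∧
  (∀ q : ℕ, q + 1 < d → suppLt (α q) (α (q + 1))) ∧
  (∀ q : ℕ, q + 1 < d → sz q < sz (q + 1)) ∧
  (∀ q : ℕ, q + 1 < d → maxSupp (α q) < sz (q + 1)) ∧
  ((Finset.range d).image fun q => minSupp (α q)) ∈ Fam

/-- One step of the inductive construction of the norming set: `W_{m+1}` from `W_m`. -/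
def Wstep (Fam : Set (Finset ℕ)) (G : Set c00) : Set c00 :=
  G ∪
  {g | ∃ (ℓ d : ℕ) (f : ℕ → c00), 2 ≤ ℓ ∧ 1 ≤ d ∧ d ≤ ℓ ∧ (∀ q < d, f q ∈ G) ∧
      (∀ q : ℕ, q + 1 < d → suppLt (f q) (f (q + 1))) ∧
      g = (ℓ : ℝ)⁻¹ • ∑ q ∈ Finset.range d, f q} ∪
  {g | ∃ (d : ℕ) (α : ℕ → c00) (sz : ℕ → ℕ), 1 ≤ d ∧ IsVFGAdm G Fam α sz d ∧
      g = ∑ q ∈ Finset.range d, α q}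

/-- The levels `W_m` of the norming set: `W_0 = {± e_n}` and `W_{m+1} = Wstep Fam W_m`. -/
def Wlevel (Fam : Set (Finset ℕ)) : ℕ → Set c00
  | 0 => {f | ∃ n : ℕ, f = Finsupp.single n 1 ∨ f = -Finsupp.single n 1}
  | m + 1 => Wstep Fam (Wlevel Fam m)

/-- The norming set `W = ⋃_m W_m` (for `Fam = 𝓢_{ω^ξ}` this is the norming set of
`𝔛_{0,1}^{ω^ξ}`). -/
def Wset (Fam : Set (Finset ℕ)) : Set c00 := ⋃ m : ℕ, Wlevel Fam m

/-- The norm of `𝔛_{0,1}^{ω^ξ}` on finitely supported vectors: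
`‖x‖ = sup {f(x) : f ∈ W}`. -/
noncomputable def Xnorm (Fam : Set (Finset ℕ)) (x : c00) : ℝ :=
  sSup {r : ℝ | ∃ f ∈ Wset Fam, r = dotc f x}

/-- A block sequence of the unit vector basis: nonzero finitely supported vectors with
successive supports. -/
def IsBlock (x : ℕ → c00) : Prop :=
  (∀ n, x n ≠ 0) ∧ ∀ m n : ℕ, m < n → suppLt (x m) (x n)

/-- A normalized block sequence of the unit vector basis of the space with norming
family `Fam`. -/
def IsNormBlock (Fam : Set (Finset ℕ)) (x : ℕ → c00) : Prop :=
  IsBlock x ∧ ∀ n, Xnorm Fam (x n) = 1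

end XSpace

/-- The index `α_{<ω^ξ}((x_k)) = 0`: for every `n`, every very fast growing sequence
`(α_q)` of `α`-averages in `W`, every successive sequence `(F_k)` of finite sets such
that each `(α_q)_{q ∈ F_k}` is `𝓢_{ξ_n}`-admissible (where `(ξ_n)` is the fixed sequence
defining `𝓢_{ω^ξ}`), and every subsequence `(x_{m_k})`,
`lim_k Σ_{q ∈ F_k} |α_q(x_{m_k})| = 0`. -/
def AlphaZero (SS : SchreierSystem) (ξ : Ordinal) (x : ℕ → c00) : Prop :=
  ∀ (n : ℕ) (α : ℕ → c00) (sz : ℕ → ℕ),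
    (∀ q : ℕ, IsAvg (Wset (SS.S (Ordinal.omega0 ^ ξ))) (α q) (sz q)) →
    (∀ q : ℕ, suppLt (α q) (α (q + 1))) →
    (∀ q : ℕ, sz q < sz (q + 1)) →
    (∀ q : ℕ, maxSupp (α q) < sz (q + 1)) →
    ∀ F : ℕ → Finset ℕ,
      (∀ m k : ℕ, m < k → ∀ i ∈ F m, ∀ j ∈ F k, i < j) →
      (∀ k : ℕ, ((F k).image fun q => minSupp (α q)) ∈
          SS.S (SS.seq (Ordinal.omega0 ^ ξ) n)) →
      ∀ m : ℕ → ℕ, StrictMono m →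
        Filter.Tendsto (fun k => ∑ q ∈ F k, |dotc (α q) (x (m k))|)
          Filter.atTop (nhds 0)

/-!
Schreier families are hereditary and spreading; consequently the norming set `W` is closed
under restricting a functional to a tail `(t, ∞)` of `ℕ` (dropping the pieces that vanish),
and so are the admissible very fast growing sequences in it.

(⇐) The sets `F_k` are successive, so eventually all their indices, and hence all the sizes
`s(α_q) ≥ q`, exceed `j₀`; enumerated in order, `(α_q)_{q ∈ F_k}` is one of the finite
sequences controlled by the hypothesis.

(⇒) If the condition fails for some `ε` and `n`, choose inductively `k_p` and finite
sequences with sizes beyond all previous data and `Σ |α_q(x_{k_p})| ≥ ε`, restricted to the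
tail beyond all previous supports; the restriction does not change the action on `x_{k_p}`,
whose support lies in that tail. Concatenated, the blocks form one infinite very fast growing
sequence along which the sums stay `≥ ε`, so `α_{<ω^ξ}((x_k)) > 0`.
-/

open Finset

section Supports

lemma minSupp_mem_support {f : c00} (hf : f ≠ 0) : minSupp f ∈ f.support := by
  obtain ⟨i, hi⟩ := Finsupp.support_nonempty_iff.2 hf
  exact Finsupp.mem_support_iff.2 (Nat.sInf_mem (s := {i | f i ≠ 0}) ⟨i, Finsupp.mem_support_iff.1 hi⟩)

lemma minSupp_le {f : c00} {i : ℕ} (hi : i ∈ f.support) : minSupp f ≤ i :=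
  Nat.sInf_le (Finsupp.mem_support_iff.1 hi)

lemma le_maxSupp {f : c00} {i : ℕ} (hi : i ∈ f.support) : i ≤ maxSupp f :=
  le_sup (f := id) hi

lemma minSupp_le_minSupp_of_support_subset {f g : c00} (hg : g ≠ 0)
    (h : g.support ⊆ f.support) : minSupp f ≤ minSupp g :=
  minSupp_le (h (minSupp_mem_support hg))

lemma maxSupp_mono {f g : c00} (h : g.support ⊆ f.support) : maxSupp g ≤ maxSupp f :=
  sup_mono h

lemma suppLt.minSupp_lt {f g : c00} (h : suppLt f g) (hf : f ≠ 0) (hg : g ≠ 0) :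
    minSupp f < minSupp g :=
  h _ (minSupp_mem_support hf) _ (minSupp_mem_support hg)

lemma suppLt.mono {f g f' g' : c00} (h : suppLt f g) (hf : f'.support ⊆ f.support)
    (hg : g'.support ⊆ g.support) : suppLt f' g' :=
  fun i hi j hj => h i (hf hi) j (hg hj)

lemma suppLt.trans {f g h : c00} (hfg : suppLt f g) (hgh : suppLt g h) (hg : g ≠ 0) :
    suppLt f h := by
  obtain ⟨k, hk⟩ := Finsupp.support_nonempty_iff.2 hg
  exact fun i hi j hj => (hfg i hi k hk).trans (hgh k hk j hj)

section Chain

variable {f : ℕ → c00} {d : ℕ}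

lemma suppLt_of_chain (hnz : ∀ q < d, f q ≠ 0)
    (hc : ∀ q, q + 1 < d → suppLt (f q) (f (q + 1))) {a b : ℕ} (hab : a < b) (hb : b < d) :
    suppLt (f a) (f b) := by
  induction b, hab using Nat.le_induction with
  | base => exact hc a hb
  | succ b hab ih => exact (ih (by omega)).trans (hc b hb) (hnz b (by omega))

lemma strictMonoOn_minSupp_of_chain (hnz : ∀ q < d, f q ≠ 0)
    (hc : ∀ q, q + 1 < d → suppLt (f q) (f (q + 1))) :
    StrictMonoOn (fun q => minSupp (f q)) (Set.Iio d) :=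
  fun a ha b hb hab => (suppLt_of_chain hnz hc hab hb).minSupp_lt (hnz a ha) (hnz b hb)

lemma sum_ne_zero_of_chain (hd : 0 < d) (hnz : ∀ q < d, f q ≠ 0)
    (hc : ∀ q, q + 1 < d → suppLt (f q) (f (q + 1))) : ∑ q ∈ range d, f q ≠ 0 := by
  intro h
  have hi := minSupp_mem_support (hnz 0 hd)
  have : (∑ q ∈ range d, f q) (minSupp (f 0)) = f 0 (minSupp (f 0)) := by
    rw [Finsupp.finsetSum_apply]
    refine sum_eq_single_of_mem 0 (mem_range.2 hd) fun q hq hq0 => ?_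
    by_contra hne
    exact lt_irrefl _ (suppLt_of_chain hnz hc (Nat.pos_of_ne_zero hq0) (mem_range.1 hq) _ hi _
      (Finsupp.mem_support_iff.2 hne))
  rw [h, Finsupp.zero_apply] at this
  exact Finsupp.mem_support_iff.1 hi this.symm

end Chain

lemma IsBlock.le_minSupp {x : ℕ → c00} (hx : IsBlock x) (k : ℕ) : k ≤ minSupp (x k) := by
  induction k with
  | zero => exact Nat.zero_le _
  | succ k ih => exact ih.trans_lt ((hx.2 k (k + 1) k.lt_succ_self).minSupp_lt (hx.1 k) (hx.1 _))

lemma IsBlock.apply_eq_zero {x : ℕ → c00} (hx : IsBlock x) {k i : ℕ} (hik : i < k) :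
    x k i = 0 := by
  by_contra h
  have := minSupp_le (Finsupp.mem_support_iff.2 h)
  have := hx.le_minSupp k
  omega

end Supports

section Schreier

/-- `F'` is a spread of a subset of `F`. -/
def Dominates (F F' : Finset ℕ) : Prop :=
  ∃ ψ : ℕ → ℕ, Set.MapsTo ψ F' F ∧ StrictMonoOn ψ F' ∧ ∀ b ∈ F', ψ b ≤ b

def IsHereditarySpreading (𝓕 : Set (Finset ℕ)) : Prop :=
  ∀ F ∈ 𝓕, ∀ F', Dominates F F' → F' ∈ 𝓕

lemma Dominates.mono_left {F G F' : Finset ℕ} (h : Dominates F F') (hFG : F ⊆ G) :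
    Dominates G F' :=
  let ⟨ψ, hmaps, hmono, hle⟩ := h
  ⟨ψ, fun _ hb => hFG (hmaps hb), hmono, hle⟩

lemma Dominates.card_le {F F' : Finset ℕ} (h : Dominates F F') : F'.card ≤ F.card :=
  let ⟨ψ, hmaps, hmono, _⟩ := h
  card_le_card_of_injOn ψ hmaps hmono.injOn

lemma dominates_image_range {u v : ℕ → ℕ} {d : ℕ} (hu : StrictMonoOn u (Set.Iio d))
    (hv : StrictMonoOn v (Set.Iio d)) (huv : ∀ i < d, u i ≤ v i) :
    Dominates ((range d).image u) ((range d).image v) := by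
  have hψ : ∀ i < d, u (Function.invFunOn v (Set.Iio d) (v i)) = u i := fun i hi =>
    congrArg u (hv.injOn.leftInvOn_invFunOn (Set.mem_Iio.2 hi))
  refine ⟨u ∘ Function.invFunOn v (Set.Iio d), ?_, ?_, ?_⟩
  · rintro _ hb
    obtain ⟨i, hi, rfl⟩ := mem_image.1 hb
    rw [mem_range] at hi
    exact mem_image.2 ⟨i, mem_range.2 hi, (hψ i hi).symm⟩
  · rintro _ ha _ hb hab
    obtain ⟨i, hi, rfl⟩ := mem_image.1 ha
    obtain ⟨j, hj, rfl⟩ := mem_image.1 hb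
    rw [mem_range] at hi hj
    simp only [Function.comp_apply, hψ i hi, hψ j hj]
    exact hu hi hj ((hv.lt_iff_lt hi hj).1 hab)
  · rintro _ hb
    obtain ⟨i, hi, rfl⟩ := mem_image.1 hb
    rw [mem_range] at hi
    simp only [Function.comp_apply, hψ i hi]
    exact huv i hi

lemma Finset.exists_strictMonoOn_image_range (s : Finset ℕ) :
    ∃ e : ℕ → ℕ, StrictMonoOn e (Set.Iio s.card) ∧ (range s.card).image e = s := by
  have hf : (Set.ofPred (· ∈ s)).Finite := s.finite_toSet
  have hcard : hf.toFinset.card = s.card := by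
    congr
    ext
    simp [Set.ofPred]
  refine ⟨Nat.nth (· ∈ s), hcard ▸ Nat.nth_strictMonoOn hf, coe_injective ?_⟩
  rw [coe_image, coe_range, ← hcard, Nat.image_nth_Iio_card hf]
  rfl

lemma Nat.sInf_lt_sInf_of_forall_lt {A B : Finset ℕ} (hA : A.Nonempty) (hB : B.Nonempty)
    (h : ∀ a ∈ A, ∀ b ∈ B, a < b) : sInf (A : Set ℕ) < sInf (B : Set ℕ) :=
  h _ (Nat.sInf_mem hA.to_set) _ (Nat.sInf_mem hB.to_set)

lemma IsHereditarySpreading.famOp {𝓕 𝓖 : Set (Finset ℕ)} (h𝓕 : IsHereditarySpreading 𝓕)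
    (h𝓖 : IsHereditarySpreading 𝓖) : IsHereditarySpreading (famOp 𝓕 𝓖) := by
  classical
  rintro _ ⟨n, E, hE𝓖, hEne, hEsucc, hmin, rfl⟩ F' ⟨ψ, hψmaps, hψmono, hψle⟩
  set kept := (range n).filter fun i => ∃ b ∈ F', ψ b ∈ E i
  obtain ⟨e, he, hekept⟩ := kept.exists_strictMonoOn_image_range
  set K := kept.card
  have he_mem : ∀ j < K, e j < n ∧ ∃ b ∈ F', ψ b ∈ E (e j) := fun j hj => by
    have : e j ∈ kept := hekept ▸ mem_image_of_mem e (mem_range.2 hj)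
    simpa [kept] using this
  set E' : ℕ → Finset ℕ := fun j => F'.filter fun b => ψ b ∈ E (e j)
  have hE'ne : ∀ j < K, (E' j).Nonempty := fun j hj => by
    obtain ⟨b, hb, hψb⟩ := (he_mem j hj).2
    exact ⟨b, mem_filter.2 ⟨hb, hψb⟩⟩
  have hE'succ : ∀ i j, i < j → j < K → ∀ a ∈ E' i, ∀ b ∈ E' j, a < b := by
    intro i j hij hj a ha b hb
    rw [mem_filter] at ha hb
    exact (hψmono.lt_iff_lt ha.1 hb.1).1
      (hEsucc _ _ (he (hij.trans hj) hj hij) (he_mem j hj).1 _ ha.2 _ hb.2)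
  refine ⟨K, E', fun j hj => h𝓖 _ (hE𝓖 _ (he_mem j hj).1) _
      ⟨ψ, fun b hb => (mem_filter.1 hb).2, hψmono.mono (filter_subset _ _),
        fun b hb => hψle b (mem_filter.1 hb).1⟩,
    hE'ne, hE'succ, h𝓕 _ hmin _ ?_, ?_⟩
  · refine (dominates_image_range (u := fun j => sInf (E (e j) : Set ℕ)) ?_ ?_ ?_).mono_left ?_
    · intro i hi j hj hij
      exact Nat.sInf_lt_sInf_of_forall_lt (hEne _ (he_mem i hi).1) (hEne _ (he_mem j hj).1)
        (hEsucc _ _ (he hi hj hij) (he_mem j hj).1)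
    · intro i hi j hj hij
      exact Nat.sInf_lt_sInf_of_forall_lt (hE'ne i hi) (hE'ne j hj) (hE'succ i j hij hj)
    · intro j hj
      have hb := Nat.sInf_mem (hE'ne j hj).to_set
      rw [mem_coe, mem_filter] at hb
      exact (Nat.sInf_le hb.2).trans (hψle _ hb.1)
    · rw [image_subset_iff]
      intro j hj
      exact mem_image_of_mem _ (mem_range.2 (he_mem j (mem_range.1 hj)).1)
  · ext b
    simp only [mem_biUnion, mem_range, E', mem_filter]
    refine ⟨fun hb => ?_, fun ⟨_, _, hb, _⟩ => hb⟩
    obtain ⟨i, hi, hψb⟩ := mem_biUnion.1 (hψmaps hb)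
    have : i ∈ kept := mem_filter.2 ⟨hi, b, hb, hψb⟩
    rw [← hekept, mem_image] at this
    obtain ⟨j, hj, rfl⟩ := this
    exact ⟨j, mem_range.1 hj, hb, hψb⟩

lemma isHereditarySpreading_schreierOne : IsHereditarySpreading schreierOne :=
  fun _ hF _ hD b hb =>
    let ⟨_, hmaps, _, hle⟩ := hD
    hD.card_le.trans ((hF _ (hmaps hb)).trans (hle b hb))

lemma isHereditarySpreading_subsingletons :
    IsHereditarySpreading {E : Finset ℕ | E = ∅ ∨ ∃ n : ℕ, E = {n}} := by
  rintro F hF F' hD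
  have hF1 : F.card ≤ 1 := by rcases hF with rfl | ⟨n, rfl⟩ <;> simp
  obtain ⟨n, hn⟩ := card_le_one_iff_subset_singleton.1 (hD.card_le.trans hF1)
  rcases subset_singleton_iff.1 hn with h | h
  exacts [Or.inl h, Or.inr ⟨n, h⟩]

theorem SchreierSystem.isHereditarySpreading (SS : SchreierSystem) {ζ : Ordinal}
    (hζ : ζ < omega1) : IsHereditarySpreading (SS.S ζ) := by
  induction ζ using WellFoundedLT.induction with
  | _ ζ ih =>
    rcases Ordinal.zero_or_succ_or_isSuccLimit ζ with rfl | ⟨η, rfl⟩ | hlim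
    · rw [SS.S_zero]
      exact isHereditarySpreading_subsingletons
    · rw [Order.succ_eq_add_one, SS.S_succ]
      exact isHereditarySpreading_schreierOne.famOp
        (ih η (Order.lt_succ η) ((Order.lt_succ η).trans hζ))
    · rw [SS.S_limit ζ hζ hlim]
      rintro F ⟨n, hn, hF⟩ F' hD
      have ⟨_, hmaps, _, hle⟩ := hD
      exact ⟨n, fun b hb => (hn _ (hmaps hb)).trans (hle b hb),
        ih _ (SS.seq_lt ζ hζ hlim n) ((SS.seq_lt ζ hζ hlim n).trans hζ) F hF F' hD⟩

end Schreier

lemma omega0_opow_lt_omega1 {ξ : Ordinal} (hξ : ξ < omega1) : Ordinal.omega0 ^ ξ < omega1 := by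
  rw [omega1, Cardinal.lt_ord, Cardinal.lt_aleph_one_iff] at hξ ⊢
  exact (Ordinal.card_opow_le _ _).trans (max_le le_rfl (max_le Ordinal.card_omega0.le hξ))

section TailRestriction

variable {G : Set c00} {t : ℕ}

lemma support_filter_lt_subset (f : c00) : (f.filter (t < ·)).support ⊆ f.support :=
  filter_subset _ _

lemma lt_of_mem_support_filter_lt {f : c00} {i : ℕ} (hi : i ∈ (f.filter (t < ·)).support) :
    t < i :=
  (mem_filter.1 hi).2

lemma zero_dotc (x : c00) : dotc 0 x = 0 := Finsupp.sum_zero_index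

lemma dotc_filter_lt {f x : c00} (hx : ∀ i ≤ t, x i = 0) :
    dotc (f.filter (t < ·)) x = dotc f x := by
  rw [dotc, Finsupp.sum_filter_index, Finsupp.support_filter, sum_filter_of_ne]
  · rfl
  · intro i _ hi
    by_contra hti
    exact hi (by rw [hx i (not_lt.1 hti), mul_zero])

lemma sum_range_eq_sum_range_sub {M : Type*} [AddCommMonoid M] {g : ℕ → M} {q₀ d : ℕ}
    (hq₀ : q₀ ≤ d) (h : ∀ q < q₀, g q = 0) :
    ∑ q ∈ range d, g q = ∑ i ∈ range (d - q₀), g (q₀ + i) := by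
  obtain ⟨r, rfl⟩ := Nat.exists_eq_add_of_le hq₀
  rw [sum_range_add, sum_eq_zero fun q hq => h q (mem_range.1 hq), zero_add,
    Nat.add_sub_cancel_left]

lemma exists_first_filter_lt_ne_zero {f : ℕ → c00} {d : ℕ} (hnz : ∀ q < d, f q ≠ 0)
    (hc : ∀ q, q + 1 < d → suppLt (f q) (f (q + 1)))
    (hne : ∃ q < d, (f q).filter (t < ·) ≠ 0) :
    ∃ q₀ < d, (∀ q < q₀, (f q).filter (t < ·) = 0) ∧ (f q₀).filter (t < ·) ≠ 0 ∧
      ∀ q, q₀ < q → q < d → (f q).filter (t < ·) = f q := by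
  classical
  refine ⟨Nat.find hne, (Nat.find_spec hne).1,
    fun q hq => not_not.1 fun h => Nat.find_min hne hq ⟨hq.trans (Nat.find_spec hne).1, h⟩, (Nat.find_spec hne).2,
    fun q hq hqd => (Finsupp.filter_eq_self_iff _ _).2 fun i hi => ?_⟩
  have hj := minSupp_mem_support (Nat.find_spec hne).2
  exact (lt_of_mem_support_filter_lt hj).trans (suppLt_of_chain hnz hc hq hqd _
    (support_filter_lt_subset _ hj) _ (Finsupp.mem_support_iff.2 hi))

def IsTailClosed (G : Set c00) : Prop :=
  ∀ f ∈ G, ∀ t : ℕ, f.filter (t < ·) = 0 ∨ f.filter (t < ·) ∈ G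

lemma exists_filter_lt_sum_eq (hG0 : 0 ∉ G) (hGt : IsTailClosed G) {f : ℕ → c00} {d : ℕ}
    (hfG : ∀ q < d, f q ∈ G) (hc : ∀ q, q + 1 < d → suppLt (f q) (f (q + 1)))
    (hne : (∑ q ∈ range d, f q).filter (t < ·) ≠ 0) :
    ∃ (d' : ℕ) (g : ℕ → c00), 0 < d' ∧ d' ≤ d ∧ (∀ q < d', g q ∈ G) ∧
      (∀ q, q + 1 < d' → suppLt (g q) (g (q + 1))) ∧
      (∑ q ∈ range d, f q).filter (t < ·) = ∑ q ∈ range d', g q := by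
  rw [Finsupp.filter_sum] at hne ⊢
  obtain ⟨q₀, hq₀, hzero, hfirst, hlater⟩ :=
    exists_first_filter_lt_ne_zero (fun q hq => ne_of_mem_of_not_mem (hfG q hq) hG0) hc
      (by by_contra! h; exact hne (sum_eq_zero fun q hq => h q (mem_range.1 hq)))
  refine ⟨d - q₀, fun i => (f (q₀ + i)).filter (t < ·), by omega, by omega, ?_,
    fun i hi => (hc (q₀ + i) (by omega)).mono (support_filter_lt_subset _)
      (support_filter_lt_subset _), sum_range_eq_sum_range_sub hq₀.le hzero⟩
  rintro (_ | i) hi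
  · exact (hGt _ (hfG q₀ hq₀) t).resolve_left hfirst
  · show (f (q₀ + (i + 1))).filter (t < ·) ∈ G
    rw [hlater _ (by omega) (by omega)]
    exact hfG _ (by omega)

lemma IsAvg.filter_lt (hG0 : 0 ∉ G) (hGt : IsTailClosed G) {α : c00} {ℓ : ℕ}
    (h : IsAvg G α ℓ) (hne : α.filter (t < ·) ≠ 0) : IsAvg G (α.filter (t < ·)) ℓ := by
  obtain ⟨hαG, hℓ, d, f, _, hdℓ, hfG, hc, rfl⟩ := h
  refine ⟨(hGt _ hαG t).resolve_left hne, hℓ, ?_⟩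
  rw [Finsupp.filter_smul] at hne ⊢
  obtain ⟨d', g, hd', hd'd, hgG, hgc, heq⟩ :=
    exists_filter_lt_sum_eq hG0 hGt hfG hc fun h => hne (by rw [h, smul_zero])
  exact ⟨d', g, hd', hd'd.trans hdℓ, hgG, hgc, by rw [heq]⟩

lemma IsVFGAdm.filter_lt {Fam : Set (Finset ℕ)} (hFam : IsHereditarySpreading Fam)
    (hG0 : 0 ∉ G) (hGt : IsTailClosed G) {α : ℕ → c00} {sz : ℕ → ℕ} {d : ℕ}
    (h : IsVFGAdm G Fam α sz d) (hne : ∃ q < d, (α q).filter (t < ·) ≠ 0) :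
    ∃ q₀ < d, (∀ q < q₀, (α q).filter (t < ·) = 0) ∧
      IsVFGAdm G Fam (fun i => (α (q₀ + i)).filter (t < ·)) (fun i => sz (q₀ + i)) (d - q₀) := by
  obtain ⟨hαavg, hαc, hsz, hms, hadm⟩ := h
  have hαnz : ∀ q < d, α q ≠ 0 := fun q hq => ne_of_mem_of_not_mem (hαavg q hq).1 hG0
  obtain ⟨q₀, hq₀, hzero, hfirst, hlater⟩ := exists_first_filter_lt_ne_zero hαnz hαc hne
  have hnz : ∀ i < d - q₀, (α (q₀ + i)).filter (t < ·) ≠ 0 := by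
    rintro (_ | i) hi
    · exact hfirst
    · rw [hlater _ (by omega) (by omega)]
      exact hαnz _ (by omega)
  have hc : ∀ i, i + 1 < d - q₀ →
      suppLt ((α (q₀ + i)).filter (t < ·)) ((α (q₀ + (i + 1))).filter (t < ·)) :=
    fun i hi => (hαc (q₀ + i) (by omega)).mono (support_filter_lt_subset _)
      (support_filter_lt_subset _)
  have hαmono := strictMonoOn_minSupp_of_chain hαnz hαc
  refine ⟨q₀, hq₀, hzero, fun i hi => (hαavg _ (by omega)).filter_lt hG0 hGt (hnz i hi), hc,
    fun i hi => hsz _ (by omega),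
    fun i hi => (maxSupp_mono (support_filter_lt_subset _)).trans_lt (hms _ (by omega)),
    hFam _ hadm _ ?_⟩
  refine (dominates_image_range (u := fun i => minSupp (α i))
    (hαmono.mono (Set.Iio_subset_Iio (by omega))) (strictMonoOn_minSupp_of_chain hnz hc)
    fun i hi => ?_).mono_left (image_subset_image (range_subset_range.2 (by omega)))
  exact (hαmono.monotoneOn (Set.mem_Iio.2 (by omega)) (Set.mem_Iio.2 (by omega))
    (Nat.le_add_left i q₀)).trans
    (minSupp_le_minSupp_of_support_subset (hnz i hi) (support_filter_lt_subset _))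

end TailRestriction

section NormingSet

variable {Fam : Set (Finset ℕ)}

lemma zero_notMem_Wlevel (m : ℕ) : (0 : c00) ∉ Wlevel Fam m := by
  induction m with
  | zero =>
    rintro ⟨n, h | h⟩
    · exact one_ne_zero (Finsupp.single_eq_zero.1 h.symm)
    · exact one_ne_zero (Finsupp.single_eq_zero.1 (neg_eq_zero.1 h.symm))
  | succ m ih =>
    rintro ((h | ⟨ℓ, d, g, hℓ, hd, -, hgG, hgc, h⟩) | ⟨d, α, sz, hd, ⟨hα, hαc, -⟩, h⟩)
    · exact ih h
    · exact smul_ne_zero (by positivity) (sum_ne_zero_of_chain hd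
        (fun q hq => ne_of_mem_of_not_mem (hgG q hq) ih) hgc) h.symm
    · exact sum_ne_zero_of_chain hd (fun q hq => ne_of_mem_of_not_mem (hα q hq).1 ih) hαc h.symm

lemma zero_notMem_Wset : (0 : c00) ∉ Wset Fam := by
  rw [Wset, Set.mem_iUnion]
  exact fun ⟨m, hm⟩ => zero_notMem_Wlevel m hm

lemma isTailClosed_Wlevel (hFam : IsHereditarySpreading Fam) (m : ℕ) :
    IsTailClosed (Wlevel Fam m) := by
  induction m with
  | zero =>
    rintro _ ⟨n, rfl | rfl⟩ t <;> by_cases h : t < n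
    · exact Or.inr ⟨n, Or.inl (Finsupp.filter_single_of_pos _ h)⟩
    · exact Or.inl (Finsupp.filter_single_of_neg _ h)
    · exact Or.inr ⟨n, Or.inr (by rw [Finsupp.filter_neg, Finsupp.filter_single_of_pos _ h])⟩
    · exact Or.inl (by rw [Finsupp.filter_neg, Finsupp.filter_single_of_neg _ h, neg_zero])
  | succ m ih =>
    have hG0 := zero_notMem_Wlevel (Fam := Fam) m
    rintro f ((hf | ⟨ℓ, d, g, hℓ, hd, hdℓ, hgG, hgc, rfl⟩) | ⟨d, α, sz, hd, hα, rfl⟩) t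
    · exact (ih f hf t).imp_right fun h => Or.inl (Or.inl h)
    · refine or_iff_not_imp_left.2 fun hne => Or.inl (Or.inr ?_)
      rw [Finsupp.filter_smul] at hne ⊢
      obtain ⟨d', g', hd', hd'd, hg'G, hg'c, heq⟩ :=
        exists_filter_lt_sum_eq hG0 ih hgG hgc fun h => hne (by rw [h, smul_zero])
      exact ⟨ℓ, d', g', hℓ, hd', hd'd.trans hdℓ, hg'G, hg'c, by rw [heq]⟩
    · refine or_iff_not_imp_left.2 fun hne => Or.inr ?_
      rw [Finsupp.filter_sum] at hne ⊢
      obtain ⟨q₀, hq₀, hzero, hα'⟩ := hα.filter_lt hFam hG0 ih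
        (by by_contra! h; exact hne (sum_eq_zero fun q hq => h q (mem_range.1 hq)))
      exact ⟨d - q₀, _, _, by omega, hα', sum_range_eq_sum_range_sub hq₀.le hzero⟩

lemma isTailClosed_Wset (hFam : IsHereditarySpreading Fam) : IsTailClosed (Wset Fam) := by
  intro f hf t
  obtain ⟨m, hm⟩ := Set.mem_iUnion.1 hf
  exact (isTailClosed_Wlevel hFam m f hm t).imp_right fun h => Set.mem_iUnion.2 ⟨m, h⟩

end NormingSet

section Concatenation

variable {d : ℕ → ℕ}

def blockStep (d : ℕ → ℕ) (pos : ℕ × ℕ) : ℕ × ℕ :=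
  if pos.2 + 1 < d pos.1 then (pos.1, pos.2 + 1) else (pos.1 + 1, 0)

/-- The position `(p, i)` of the `q`-th term in the concatenation of blocks of lengths `d p`. -/
def blockPos (d : ℕ → ℕ) (q : ℕ) : ℕ × ℕ := (blockStep d)^[q] (0, 0)

lemma blockPos_succ (q : ℕ) : blockPos d (q + 1) = blockStep d (blockPos d q) :=
  Function.iterate_succ_apply' _ _ _

lemma blockPos_snd_lt (hd : ∀ p, 0 < d p) (q : ℕ) : (blockPos d q).2 < d (blockPos d q).1 := by
  induction q with
  | zero => exact hd 0
  | succ q ih =>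
    rw [blockPos_succ, blockStep]
    split_ifs with h
    exacts [h, hd _]

lemma blockPos_rel (hd : ∀ p, 0 < d p) {R : ℕ × ℕ → ℕ × ℕ → Prop}
    (hin : ∀ p i, i + 1 < d p → R (p, i) (p, i + 1)) (hout : ∀ p i, i < d p → R (p, i) (p + 1, 0))
    (q : ℕ) : R (blockPos d q) (blockPos d (q + 1)) := by
  rw [blockPos_succ, blockStep]
  split_ifs with h
  · exact hin _ _ h
  · exact hout _ _ (blockPos_snd_lt hd q)

lemma blockPos_add {a p : ℕ} (h : blockPos d a = (p, 0)) {i : ℕ} (hi : i < d p) :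
    blockPos d (a + i) = (p, i) := by
  induction i with
  | zero => exact h
  | succ i ih => rw [← add_assoc, blockPos_succ, ih (by omega), blockStep, if_pos hi]

lemma blockPos_sum (hd : ∀ p, 0 < d p) (p : ℕ) : blockPos d (∑ r ∈ range p, d r) = (p, 0) := by
  induction p with
  | zero => rfl
  | succ p ih =>
    have hdp := hd p
    rw [sum_range_succ, ← Nat.sub_add_cancel hdp, ← add_assoc, blockPos_succ,
      blockPos_add ih (by omega), blockStep, if_neg (by dsimp only; omega)]

lemma blockPos_sum_add (hd : ∀ p, 0 < d p) {p i : ℕ} (hi : i < d p) :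
    blockPos d (∑ r ∈ range p, d r + i) = (p, i) :=
  blockPos_add (blockPos_sum hd p) hi

lemma lt_of_mem_image_range_sum_add (d : ℕ → ℕ) {p p' a b : ℕ} (hpp' : p < p')
    (ha : a ∈ (range (d p)).image (∑ r ∈ range p, d r + ·))
    (hb : b ∈ (range (d p')).image (∑ r ∈ range p', d r + ·)) : a < b := by
  obtain ⟨i, hi, rfl⟩ := mem_image.1 ha
  obtain ⟨j, -, rfl⟩ := mem_image.1 hb
  have := sum_le_sum_of_subset (f := d) (range_subset_range.2 hpp')
  rw [sum_range_succ] at this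
  have := mem_range.1 hi
  omega

end Concatenation

def IsVFGSeq (G : Set c00) (α : ℕ → c00) (sz : ℕ → ℕ) : Prop :=
  (∀ q, IsAvg G (α q) (sz q)) ∧ (∀ q, suppLt (α q) (α (q + 1))) ∧
    (∀ q, sz q < sz (q + 1)) ∧ ∀ q, maxSupp (α q) < sz (q + 1)

lemma isVFGSeq_concat {G : Set c00} {Fam : Set (Finset ℕ)} {d : ℕ → ℕ} (hd : ∀ p, 0 < d p)
    {β : ℕ → ℕ → c00} {sz : ℕ → ℕ → ℕ} (hβ : ∀ p, IsVFGAdm G Fam (β p) (sz p) (d p))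
    (hglue : ∀ p, ∀ i < d p, suppLt (β p i) (β (p + 1) 0) ∧ sz p i < sz (p + 1) 0 ∧
      maxSupp (β p i) < sz (p + 1) 0) :
    IsVFGSeq G (fun q => β (blockPos d q).1 (blockPos d q).2)
      (fun q => sz (blockPos d q).1 (blockPos d q).2) :=
  ⟨fun q => (hβ _).1 _ (blockPos_snd_lt hd q),
    blockPos_rel hd (R := fun a b => suppLt (β a.1 a.2) (β b.1 b.2))
      (fun p => (hβ p).2.1) fun p i hi => (hglue p i hi).1,
    blockPos_rel hd (R := fun a b => sz a.1 a.2 < sz b.1 b.2)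
      (fun p => (hβ p).2.2.1) fun p i hi => (hglue p i hi).2.1,
    blockPos_rel hd (R := fun a b => maxSupp (β a.1 a.2) < sz b.1 b.2)
      (fun p => (hβ p).2.2.2.1) fun p i hi => (hglue p i hi).2.2⟩

lemma IsVFGSeq.exists_isVFGAdm_comp {G : Set c00} {Fam : Set (Finset ℕ)} (hG0 : 0 ∉ G)
    {α : ℕ → c00} {sz : ℕ → ℕ} (hα : IsVFGSeq G α sz) {s : Finset ℕ}
    (hs : s.image (fun q => minSupp (α q)) ∈ Fam) :
    ∃ e : ℕ → ℕ, StrictMonoOn e (Set.Iio s.card) ∧ (range s.card).image e = s ∧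
      IsVFGAdm G Fam (fun i => α (e i)) (fun i => sz (e i)) s.card := by
  obtain ⟨havg, hc, hsz, hms⟩ := hα
  obtain ⟨e, he, hes⟩ := s.exists_strictMonoOn_image_range
  have hsz' : StrictMono sz := strictMono_nat_of_lt_succ hsz
  have he' : ∀ i, i + 1 < s.card → e i < e (i + 1) := fun i hi =>
    he (Set.mem_Iio.2 (by omega)) (Set.mem_Iio.2 hi) i.lt_succ_self
  refine ⟨e, he, hes, fun i _ => havg _, fun i hi => ?_, fun i hi => hsz' (he' i hi),
    fun i hi => (hms _).trans_le (hsz'.monotone (he' i hi)), ?_⟩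
  · exact suppLt_of_chain (d := e (i + 1) + 1) (fun q _ => ne_of_mem_of_not_mem (havg q).1 hG0)
      (fun q _ => hc q) (he' i hi) (Nat.lt_succ_self _)
  · rw [← hes, image_image] at hs
    exact hs

section Directions

variable {G : Set c00} {Fam : Set (Finset ℕ)} {x : ℕ → c00}

lemma exists_forall_le_of_successive {F : ℕ → Finset ℕ}
    (hF : ∀ m k : ℕ, m < k → ∀ i ∈ F m, ∀ j ∈ F k, i < j) (j : ℕ) :
    ∃ K, ∀ k, K ≤ k → ∀ q ∈ F k, j ≤ q := by
  induction j with
  | zero => exact ⟨0, fun _ _ _ _ => Nat.zero_le _⟩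
  | succ j ih =>
    obtain ⟨K, hK⟩ := ih
    by_cases h : ∃ k, K ≤ k ∧ (F k).Nonempty
    · obtain ⟨k₁, hk₁, q₁, hq₁⟩ := h
      exact ⟨k₁ + 1, fun k hk q hq =>
        (hK k₁ hk₁ q₁ hq₁).trans_lt (hF k₁ k (by omega) q₁ hq₁ q hq)⟩
    · exact ⟨K, fun k hk q hq => (h ⟨k, hk, q, hq⟩).elim⟩

lemma tendsto_sum_of_forall_exists (hG0 : 0 ∉ G)
    (h : ∀ ε : ℝ, 0 < ε → ∃ j₀ k₀ : ℕ, ∀ k : ℕ, k₀ ≤ k → ∀ (d : ℕ) (α : ℕ → c00) (sz : ℕ → ℕ),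
      IsVFGAdm G Fam α sz d → (∀ q < d, j₀ < sz q) → ∑ q ∈ range d, |dotc (α q) (x k)| < ε)
    {α : ℕ → c00} {sz : ℕ → ℕ} (hα : IsVFGSeq G α sz) {F : ℕ → Finset ℕ}
    (hF : ∀ m k : ℕ, m < k → ∀ i ∈ F m, ∀ j ∈ F k, i < j)
    (hadm : ∀ k, (F k).image (fun q => minSupp (α q)) ∈ Fam) {m : ℕ → ℕ} (hm : StrictMono m) :
    Tendsto (fun k => ∑ q ∈ F k, |dotc (α q) (x (m k))|) atTop (𝓝 0) := by
  have hsz : StrictMono sz := strictMono_nat_of_lt_succ hα.2.2.1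
  rw [Metric.tendsto_atTop]
  intro ε hε
  obtain ⟨j₀, k₀, hj₀⟩ := h ε hε
  obtain ⟨K, hK⟩ := exists_forall_le_of_successive hF (j₀ + 1)
  refine ⟨max K k₀, fun k hk => ?_⟩
  obtain ⟨e, he, hes, hvfg⟩ := hα.exists_isVFGAdm_comp hG0 (hadm k)
  rw [Real.dist_eq, sub_zero, abs_of_nonneg (sum_nonneg fun _ _ => abs_nonneg _), ← hes,
    sum_image fun a ha b hb => he.injOn (by simpa using ha) (by simpa using hb)]
  refine hj₀ (m k) ((le_max_right _ _).trans (hk.trans hm.le_apply)) _ _ _ hvfg fun i hi => ?_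
  have := hK k ((le_max_left _ _).trans hk) (e i) (hes ▸ mem_image_of_mem e (mem_range.2 hi))
  exact (show j₀ < e i by omega).trans_le hsz.le_apply

lemma exists_tail_stage (hG0 : 0 ∉ G) (hGt : IsTailClosed G) (hFam : IsHereditarySpreading Fam)
    (hx : IsBlock x) {ε : ℝ} (hε : 0 < ε)
    (hlarge : ∀ j₀ k₀ : ℕ, ∃ k, k₀ ≤ k ∧ ∃ (d : ℕ) (α : ℕ → c00) (sz : ℕ → ℕ),
      IsVFGAdm G Fam α sz d ∧ (∀ q < d, j₀ < sz q) ∧ ε ≤ ∑ q ∈ range d, |dotc (α q) (x k)|)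
    (t : ℕ) :
    ∃ (k d : ℕ) (β : ℕ → c00) (sz : ℕ → ℕ), t < k ∧ 0 < d ∧ IsVFGAdm G Fam β sz d ∧
      (∀ q < d, t < sz q) ∧ (∀ q < d, ∀ i ∈ (β q).support, t < i) ∧
      ε ≤ ∑ q ∈ range d, |dotc (β q) (x k)| := by
  obtain ⟨k, hk, d, α, sz, hα, hsz, hsum⟩ := hlarge t (t + 1)
  have hdot : ∀ q, dotc ((α q).filter (t < ·)) (x k) = dotc (α q) (x k) := fun q =>
    dotc_filter_lt fun i hi => hx.apply_eq_zero (by omega)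
  have hne : ∃ q < d, (α q).filter (t < ·) ≠ 0 := by
    by_contra! h
    have : ∑ q ∈ range d, |dotc (α q) (x k)| = 0 := sum_eq_zero fun q hq => by
      rw [← hdot, h q (mem_range.1 hq), zero_dotc, abs_zero]
    linarith
  obtain ⟨q₀, hq₀, hzero, hα'⟩ := hα.filter_lt hFam hG0 hGt hne
  refine ⟨k, d - q₀, _, _, by omega, by omega, hα', fun i _ => hsz _ (by omega),
    fun i _ j hj => lt_of_mem_support_filter_lt hj, ?_⟩
  calc ε ≤ ∑ q ∈ range d, |dotc (α q) (x k)| := hsum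
    _ = ∑ i ∈ range (d - q₀), |dotc (α (q₀ + i)) (x k)| :=
      sum_range_eq_sum_range_sub hq₀.le fun q hq => by
        rw [← hdot, hzero q hq, zero_dotc, abs_zero]
    _ = _ := sum_congr rfl fun i _ => by rw [hdot]

lemma exists_isVFGSeq_of_large_sums (hG0 : 0 ∉ G) (hGt : IsTailClosed G)
    (hFam : IsHereditarySpreading Fam) (hx : IsBlock x) {ε : ℝ} (hε : 0 < ε)
    (hlarge : ∀ j₀ k₀ : ℕ, ∃ k, k₀ ≤ k ∧ ∃ (d : ℕ) (α : ℕ → c00) (sz : ℕ → ℕ),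
      IsVFGAdm G Fam α sz d ∧ (∀ q < d, j₀ < sz q) ∧ ε ≤ ∑ q ∈ range d, |dotc (α q) (x k)|) :
    ∃ (α : ℕ → c00) (sz : ℕ → ℕ) (F : ℕ → Finset ℕ) (k : ℕ → ℕ), IsVFGSeq G α sz ∧
      (∀ p p' : ℕ, p < p' → ∀ i ∈ F p, ∀ j ∈ F p', i < j) ∧
      (∀ p, (F p).image (fun q => minSupp (α q)) ∈ Fam) ∧ StrictMono k ∧
      ∀ p, ε ≤ ∑ q ∈ F p, |dotc (α q) (x (k p))| := by
  choose K D B S hK hD hB hS hsupp hsum using exists_tail_stage hG0 hGt hFam hx hε hlarge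
  -- the threshold after a stage bounds its index, its supports and its sizes
  set N : ℕ → ℕ := fun t => K t + ∑ q ∈ range (D t), (maxSupp (B t q) + S t q)
  set τ : ℕ → ℕ := fun p => N^[p] 0
  have hτ : ∀ p, τ (p + 1) = N (τ p) := fun p => Function.iterate_succ_apply' N p 0
  set d : ℕ → ℕ := fun p => D (τ p)
  have hd : ∀ p, 0 < d p := fun p => hD _
  have hbound : ∀ p, ∀ i < d p, maxSupp (B (τ p) i) + S (τ p) i ≤ τ (p + 1) := fun p i hi => by
    rw [hτ]
    exact (single_le_sum (f := fun q => maxSupp (B (τ p) q) + S (τ p) q)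
      (fun _ _ => Nat.zero_le _) (mem_range.2 hi)).trans (Nat.le_add_left _ _)
  have hpos : ∀ p, ∀ i < d p, blockPos d (∑ r ∈ range p, d r + i) = (p, i) :=
    fun p i hi => blockPos_sum_add hd hi
  refine ⟨_, _, fun p => (range (d p)).image (∑ r ∈ range p, d r + ·), fun p => K (τ p),
    isVFGSeq_concat hd (fun p => hB _) fun p i hi => ⟨?_, ?_, ?_⟩, ?_, fun p => ?_, ?_, fun p => ?_⟩
  · exact fun a ha b hb => by
      linarith [le_maxSupp ha, hsupp (τ (p + 1)) 0 (hd _) b hb, hbound p i hi]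
  · linarith [hS (τ (p + 1)) 0 (hd _), hbound p i hi]
  · linarith [hS (τ (p + 1)) 0 (hd _), hbound p i hi]
  · exact fun p p' hpp' _ ha _ hb => lt_of_mem_image_range_sum_add d hpp' ha hb
  · rw [image_image]
    convert hB (τ p) |>.2.2.2.2 using 1
    exact image_congr fun i hi => by simp only [Function.comp_apply, hpos p i (mem_range.1 hi)]
  · refine strictMono_nat_of_lt_succ fun p => ?_
    have := hK (τ (p + 1))
    rw [hτ] at this ⊢
    exact (Nat.le_add_right _ _).trans_lt this
  · rw [sum_image fun _ _ _ _ h => Nat.add_left_cancel h]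
    convert hsum (τ p) using 1
    exact sum_congr rfl fun i hi => by simp only [hpos p i (mem_range.1 hi)]

end Directions

/-- **Statement 16.** For a block sequence `(x_k)` in `𝔛_{0,1}^{ω^ξ}`,
`α_{<ω^ξ}((x_k)) = 0` iff for every `ε > 0` and `n ∈ ℕ` there exist `j₀, k₀` such that
for every `k ≥ k₀` and every `𝓢_{ξ_n}`-admissible very fast growing sequence
`(α_q)_{q<d}` of `α`-averages in `W` with all sizes `> j₀`, `Σ_{q<d} |α_q(x_k)| < ε`. -/
theorem statement16 (SS : SchreierSystem) (ξ : Ordinal) (h1 : 1 ≤ ξ) (hξ : ξ < omega1)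
    (x : ℕ → c00) (hx : IsBlock x) :
    AlphaZero SS ξ x ↔
      ∀ ε : ℝ, 0 < ε → ∀ n : ℕ, ∃ j₀ k₀ : ℕ, ∀ k : ℕ, k₀ ≤ k →
        ∀ (d : ℕ) (α : ℕ → c00) (sz : ℕ → ℕ),
          IsVFGAdm (Wset (SS.S (Ordinal.omega0 ^ ξ)))
            (SS.S (SS.seq (Ordinal.omega0 ^ ξ) n)) α sz d →
          (∀ q < d, j₀ < sz q) →
          ∑ q ∈ Finset.range d, |dotc (α q) (x k)| < ε := by
  have hω := omega0_opow_lt_omega1 hξ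
  have hlim : Order.IsSuccLimit (Ordinal.omega0 ^ ξ) :=
    Ordinal.isSuccLimit_opow_left Ordinal.isSuccLimit_omega0 (Order.one_le_iff_ne_zero.1 h1)
  constructor
  · intro hAZ ε hε n
    by_contra! hlarge
    obtain ⟨α, sz, F, k, hα, hF, hadm, hk, hsum⟩ := exists_isVFGSeq_of_large_sums
      zero_notMem_Wset (isTailClosed_Wset (SS.isHereditarySpreading hω))
      (SS.isHereditarySpreading ((SS.seq_lt _ hω hlim n).trans hω)) hx hε hlarge
    obtain ⟨p, hp⟩ := ((hAZ n α sz hα.1 hα.2.1 hα.2.2.1 hα.2.2.2 F hF hadm k hk).eventually_lt_const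
      hε).exists
    exact (hsum p).not_gt hp
  · intro h n α sz havg hc hsz hms F hF hadm m hm
    exact tendsto_sum_of_forall_exists zero_notMem_Wset (fun ε hε => h ε hε n)
      ⟨havg, hc, hsz, hms⟩ hF hadm hm
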